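/- Let 𝕀 be a nonempty bounded connected open subset of ℝⁿ such that ℝⁿ ∖ cl 𝕀 is connected and cl 𝕀 ⊆ Q. Let u : cl 𝕊[𝕀]⁻ → ℝ be continuous, q-periodic, twice continuously differentiable on 𝕊[𝕀]⁻, and harmonic on 𝕊[𝕀]⁻. If there exists a point x₀ ∈ 𝕊[𝕀]⁻ such that u(x₀) = max_{cl 𝕊[𝕀]⁻} u (i.e. u(x₀) ≥ u(x) for all x ∈ cl 𝕊[𝕀]⁻), then u is constant on 𝕊[𝕀]⁻. -/

import Mathlib

open MeasureTheory Real
open scoped BigOperators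

noncomputable section

/-- The point `q z` of the lattice `q ℤⁿ`. -/
def latticePt (n : ℕ) (qd : Fin n → ℝ) (z : Fin n → ℤ) : EuclideanSpace ℝ (Fin n) :=
  WithLp.toLp 2 (fun j => qd j * (z j : ℝ))

/-- The fundamental periodicity cell `Q = ∏_j (0, q_{jj})`. -/
def cellQ (n : ℕ) (qd : Fin n → ℝ) : Set (EuclideanSpace ℝ (Fin n)) :=
  {x | ∀ j, x j ∈ Set.Ioo 0 (qd j)}

/-- The periodically perforated domain `𝕊[𝕀]⁻ = ℝⁿ ∖ ⋃_{z ∈ ℤⁿ} cl(qz + 𝕀)`. -/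
def perfDom (n : ℕ) (qd : Fin n → ℝ) (I : Set (EuclideanSpace ℝ (Fin n))) :
    Set (EuclideanSpace ℝ (Fin n)) :=
  (⋃ z : Fin n → ℤ, closure ((latticePt n qd z + ·) '' I))ᶜ

/-- The Laplacian `Δu(x) = ∑_j ∂²u/∂x_j²(x)`. -/
def laplacian (n : ℕ) (u : EuclideanSpace ℝ (Fin n) → ℝ) (x : EuclideanSpace ℝ (Fin n)) : ℝ :=
  ∑ j : Fin n,
    fderiv ℝ (fun y => fderiv ℝ u y (EuclideanSpace.single j (1 : ℝ))) x
      (EuclideanSpace.single j (1 : ℝ))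

/-!
Since `u ≤ u x₀` on the open set `𝕊[𝕀]⁻`, the theorem is the strong maximum principle for
subharmonic functions on a connected open set, proved with Hopf's barrier
`w x = exp (-α ‖x - c‖²) - exp (-α r²)`. If `u < M` on a ball `B(c, r)` inside the domain and
`u p = M` at a point `p` of its boundary, then for small `δ > 0` the function `u + δ w` is `≤ M`
near `p`, with equality at `p`, while `Δ (u + δ w) > 0` there: this contradicts the second
derivative test. Hence `{u = M}` is open (blow up a ball inside `{u < M}` until it touches
`{u = M}`), and it is closed in the domain.

`𝕊[𝕀]⁻` is open because the holes `qz + cl 𝕀` form a locally finite family. It is connected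
because each closed cell minus its hole is the image of the connected set `ℝⁿ ∖ (qz + cl 𝕀)`
under the retraction onto the closed cell, and all these pieces meet the grid of cell walls,
which is connected for `n ≥ 2`.
-/

open Filter Metric Topology

section SecondDerivative

variable {E : Type*} [NormedAddCommGroup E] [NormedSpace ℝ E]

theorem deriv_deriv_nonpos_of_isLocalMax {g : ℝ → ℝ} {a : ℝ} (hmax : IsLocalMax g a)
    (hg : ContinuousAt g a) : deriv (deriv g) a ≤ 0 := by
  by_contra! hpos
  -- the second derivative test would make `a` a local minimum as well, so `g` is locally constant
  have hconst : g =ᶠ[𝓝 a] fun _ => g a :=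
    (hmax.and (isLocalMin_of_deriv_deriv_pos hpos hmax.deriv_eq_zero hg)).mono
      fun _ ht => le_antisymm ht.1 ht.2
  have hderiv : deriv g =ᶠ[𝓝 a] fun _ => 0 :=
    hconst.eventuallyEq_nhds.mono fun _ ht => by rw [ht.deriv_eq, deriv_const]
  simp [hderiv.deriv_eq] at hpos

theorem hasDerivAt_comp_add_smul {f : E → ℝ} {x e : E} {t : ℝ}
    (hf : DifferentiableAt ℝ f (x + t • e)) :
    HasDerivAt (fun s : ℝ => f (x + s • e)) (fderiv ℝ f (x + t • e) e) t := by
  have hline : HasDerivAt (fun s : ℝ => x + s • e) e t := by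
    simpa using ((hasDerivAt_id t).smul_const e).const_add x
  exact hf.hasFDerivAt.comp_hasDerivAt t hline

theorem ContDiffAt.differentiableAt_fderiv_apply {f : E → ℝ} {x : E}
    (hf : ContDiffAt ℝ 2 f x) (e : E) :
    DifferentiableAt ℝ (fun y => fderiv ℝ f y e) x :=
  ((hf.fderiv_right (m := 1) (by norm_num)).differentiableAt one_ne_zero).clm_apply
    (differentiableAt_const e)

theorem ContDiffAt.deriv_deriv_comp_add_smul {f : E → ℝ} {x : E} (hf : ContDiffAt ℝ 2 f x)
    (e : E) :
    deriv (deriv fun t : ℝ => f (x + t • e)) 0 = fderiv ℝ (fun y => fderiv ℝ f y e) x e := by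
  have hline : Tendsto (fun t : ℝ => x + t • e) (𝓝 0) (𝓝 x) :=
    (by fun_prop : Continuous fun t : ℝ => x + t • e).tendsto' 0 x (by simp)
  have hderiv : deriv (fun t : ℝ => f (x + t • e)) =ᶠ[𝓝 0]
      fun t => fderiv ℝ f (x + t • e) e := by
    filter_upwards [hline.eventually (hf.eventually (by simp))] with t ht
    exact (hasDerivAt_comp_add_smul (ht.differentiableAt two_ne_zero)).deriv
  rw [hderiv.deriv_eq]
  simpa using (hasDerivAt_comp_add_smul (x := x) (e := e) (t := 0)
    (by simpa using hf.differentiableAt_fderiv_apply e)).deriv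

theorem fderiv_fderiv_apply_nonpos_of_isLocalMax {f : E → ℝ} {x : E} (hf : ContDiffAt ℝ 2 f x)
    (hmax : IsLocalMax f x) (e : E) : fderiv ℝ (fun y => fderiv ℝ f y e) x e ≤ 0 := by
  rw [← hf.deriv_deriv_comp_add_smul e]
  have hline : Continuous fun t : ℝ => x + t • e := by fun_prop
  refine deriv_deriv_nonpos_of_isLocalMax ?_ ?_
  · exact IsLocalMax.comp_continuous (g := fun t : ℝ => x + t • e) (by simpa using hmax)
      hline.continuousAt
  · exact hf.continuousAt.comp_of_eq hline.continuousAt (by simp)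

end SecondDerivative

section Laplacian

variable {n : ℕ} {f g : EuclideanSpace ℝ (Fin n) → ℝ} {x : EuclideanSpace ℝ (Fin n)}

theorem laplacian_nonpos_of_isLocalMax (hf : ContDiffAt ℝ 2 f x) (hmax : IsLocalMax f x) :
    laplacian n f x ≤ 0 :=
  Finset.sum_nonpos fun _ _ => fderiv_fderiv_apply_nonpos_of_isLocalMax hf hmax _

theorem laplacian_add (hf : ContDiffAt ℝ 2 f x) (hg : ContDiffAt ℝ 2 g x) :
    laplacian n (f + g) x = laplacian n f x + laplacian n g x := by
  rw [laplacian, laplacian, laplacian, ← Finset.sum_add_distrib]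
  refine Finset.sum_congr rfl fun j _ => ?_
  set e := EuclideanSpace.single j (1 : ℝ)
  have hsum : (fun y => fderiv ℝ (f + g) y e) =ᶠ[𝓝 x]
      (fun y => fderiv ℝ f y e) + fun y => fderiv ℝ g y e := by
    filter_upwards [hf.eventually (by simp), hg.eventually (by simp)] with y hfy hgy
    simp [fderiv_add (hfy.differentiableAt two_ne_zero) (hgy.differentiableAt two_ne_zero)]
  rw [hsum.fderiv_eq, fderiv_add (hf.differentiableAt_fderiv_apply e)
    (hg.differentiableAt_fderiv_apply e)]
  rfl

theorem laplacian_const_smul (c : ℝ) : laplacian n (c • f) x = c * laplacian n f x := by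
  simp only [laplacian, fderiv_const_smul_field, Finset.mul_sum]
  refine Finset.sum_congr rfl fun j _ => ?_
  change fderiv ℝ (c • fun y => fderiv ℝ f y _) x _ = _
  simp [fderiv_const_smul_field]

end Laplacian

section HopfBarrier

variable {E : Type*} [NormedAddCommGroup E]

def hopfBarrier (α r : ℝ) (c : E) : E → ℝ :=
  fun x => rexp (-α * ‖x - c‖ ^ 2) - rexp (-α * r ^ 2)

variable {α r : ℝ} {c x : E}

theorem hopfBarrier_le_one (hα : 0 ≤ α) : hopfBarrier α r c x ≤ 1 := by
  have h : rexp (-α * ‖x - c‖ ^ 2) ≤ 1 :=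
    exp_le_one_iff.mpr (by nlinarith [norm_nonneg (x - c)])
  simp only [hopfBarrier]
  linarith [exp_pos (-α * r ^ 2)]

theorem hopfBarrier_nonpos (hα : 0 ≤ α) (hr : 0 ≤ r) (hx : r ≤ dist x c) :
    hopfBarrier α r c x ≤ 0 := by
  rw [dist_eq_norm] at hx
  simp only [hopfBarrier, sub_nonpos, exp_le_exp, neg_mul, neg_le_neg_iff]
  exact mul_le_mul_of_nonneg_left (pow_le_pow_left₀ hr hx 2) hα

theorem hopfBarrier_eq_zero_of_dist_eq (hx : dist x c = r) : hopfBarrier α r c x = 0 := by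
  simp [hopfBarrier, ← dist_eq_norm, hx]

variable [InnerProductSpace ℝ E]

theorem contDiff_hopfBarrier (α r : ℝ) (c : E) : ContDiff ℝ 2 (hopfBarrier α r c) :=
  ((((contDiff_norm_sq ℝ).comp (contDiff_id.sub contDiff_const)).const_smul (-α)).exp).sub
    contDiff_const

theorem hasFDerivAt_exp_neg_mul_norm_sub_sq (α : ℝ) (c y : E) :
    HasFDerivAt (fun z => rexp (-α * ‖z - c‖ ^ 2))
      ((-2 * α * rexp (-α * ‖y - c‖ ^ 2)) • innerSL ℝ (y - c)) y := by
  refine (((hasFDerivAt_id y).sub_const c).norm_sq.const_mul (-α)).exp.congr_fderiv ?_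
  ext v
  simp
  ring

theorem fderiv_hopfBarrier_apply (α r : ℝ) (c y e : E) :
    fderiv ℝ (hopfBarrier α r c) y e =
      -2 * α * rexp (-α * ‖y - c‖ ^ 2) * inner ℝ (y - c) e := by
  unfold hopfBarrier
  rw [fderiv_sub_const, (hasFDerivAt_exp_neg_mul_norm_sub_sq α c y).fderiv]
  rfl

theorem fderiv_fderiv_hopfBarrier_apply (α r : ℝ) (c x e : E) :
    fderiv ℝ (fun y => fderiv ℝ (hopfBarrier α r c) y e) x e =
      rexp (-α * ‖x - c‖ ^ 2) * (4 * α ^ 2 * inner ℝ (x - c) e ^ 2 - 2 * α * ‖e‖ ^ 2) := by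
  simp only [fderiv_hopfBarrier_apply]
  have h : HasFDerivAt (fun y => -2 * α * rexp (-α * ‖y - c‖ ^ 2) * inner ℝ (y - c) e) _ x :=
    ((hasFDerivAt_exp_neg_mul_norm_sub_sq α c x).const_mul (-2 * α)).fun_mul
      (((hasFDerivAt_id x).sub_const c).inner ℝ (hasFDerivAt_const e x))
  rw [h.fderiv]
  simp [inner_sub_left]
  ring

end HopfBarrier

theorem IsOpen.exists_maximal_ball_subset {X : Type*} [MetricSpace X] [ProperSpace X] {N : Set X}
    (hN : IsOpen N) {y x : X} (hy : y ∈ N) (hx : x ∉ N) :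
    ∃ r, 0 < r ∧ r ≤ dist y x ∧ ball y r ⊆ N ∧ ∃ p ∉ N, dist p y = r := by
  obtain ⟨p, hp, hpy⟩ := hN.isClosed_compl.exists_infDist_eq_dist ⟨x, hx⟩ y
  refine ⟨infDist y Nᶜ, (hN.isClosed_compl.notMem_iff_infDist_pos ⟨x, hx⟩).mp (not_not.mpr hy),
    infDist_le_dist_of_mem hx, ball_infDist_compl_subset, p, hp, ?_⟩
  rw [hpy, dist_comm]

section MaximumPrinciple

variable {n : ℕ} {U : Set (EuclideanSpace ℝ (Fin n))} {u : EuclideanSpace ℝ (Fin n) → ℝ}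
  {M r : ℝ} {c : EuclideanSpace ℝ (Fin n)}

theorem laplacian_hopfBarrier (α r : ℝ) (c x : EuclideanSpace ℝ (Fin n)) :
    laplacian n (hopfBarrier α r c) x =
      rexp (-α * ‖x - c‖ ^ 2) * (4 * α ^ 2 * ‖x - c‖ ^ 2 - 2 * α * n) := by
  simp [laplacian, fderiv_fderiv_hopfBarrier_apply, EuclideanSpace.inner_single_right,
    EuclideanSpace.real_norm_sq_eq (x - c), ← Finset.mul_sum, Finset.sum_sub_distrib]
  ring

theorem laplacian_hopfBarrier_pos {x : EuclideanSpace ℝ (Fin n)} (hr : 0 < r)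
    (hx : r / 2 < dist x c) : 0 < laplacian n (hopfBarrier (2 * (n + 1) / r ^ 2) r c) x := by
  rw [laplacian_hopfBarrier, ← dist_eq_norm]
  have hsq : r ^ 2 < 4 * dist x c ^ 2 := by nlinarith
  refine mul_pos (exp_pos _) ?_
  field_simp
  nlinarith [mul_pos (by positivity : (0 : ℝ) < n + 1) (sub_pos.mpr hsq)]

theorem not_isLocalMax_add_smul_hopfBarrier {x : EuclideanSpace ℝ (Fin n)} {ε : ℝ}
    (hu : ContDiffAt ℝ 2 u x) (hΔu : 0 ≤ laplacian n u x) (hε : 0 < ε) (hr : 0 < r)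
    (hx : r / 2 < dist x c) :
    ¬ IsLocalMax (u + ε • hopfBarrier (2 * (n + 1) / r ^ 2) r c) x := by
  intro hmax
  have hw : ContDiffAt ℝ 2 (ε • hopfBarrier (2 * (n + 1) / r ^ 2) r c) x :=
    ((contDiff_hopfBarrier _ r c).const_smul ε).contDiffAt
  have hnonpos := laplacian_nonpos_of_isLocalMax
    (f := u + ε • hopfBarrier (2 * (n + 1) / r ^ 2) r c) (hu.add hw) hmax
  rw [laplacian_add hu hw, laplacian_const_smul] at hnonpos
  nlinarith [laplacian_hopfBarrier_pos hr hx (n := n)]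

theorem add_smul_hopfBarrier_le {δ : ℝ} (hU : IsOpen U) (hC2 : ContDiffOn ℝ 2 u U)
    (hΔu : ∀ x ∈ U, 0 ≤ laplacian n u x) (hle : ∀ x ∈ U, u x ≤ M) (hr : 0 < r)
    (hball : closedBall c r ⊆ U) (hδ : 0 < δ) (hδle : ∀ x ∈ sphere c (r / 2), u x + δ ≤ M) :
    ∀ x ∈ U, r / 2 ≤ dist x c → (u + δ • hopfBarrier (2 * (n + 1) / r ^ 2) r c) x ≤ M := by
  set v := u + δ • hopfBarrier (2 * (n + 1) / r ^ 2) r c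
  have hα : (0 : ℝ) ≤ 2 * (n + 1) / r ^ 2 := by positivity
  have hout : ∀ x ∈ U, r ≤ dist x c → v x ≤ M := fun x hxU hxr => by
    have := hopfBarrier_nonpos hα hr.le hxr
    simp only [v, Pi.add_apply, Pi.smul_apply, smul_eq_mul]
    nlinarith [hle x hxU]
  intro x hxU hx
  rcases le_or_gt r (dist x c) with hxr | hxr
  · exact hout x hxU hxr
  -- on the annulus `A`, `Δv > 0` rules out an interior maximum, and `v ≤ M` on both spheres
  set A := closedBall c r \ ball c (r / 2)
  have hvcont : ContinuousOn v A :=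
    (hC2.continuousOn.mono (Set.sdiff_subset.trans hball)).add
      ((contDiff_hopfBarrier _ r c).continuous.const_smul δ).continuousOn
  have hxA : x ∈ A := ⟨mem_closedBall.mpr hxr.le, by simpa using hx⟩
  obtain ⟨m, ⟨hmr, hm⟩, hmmax⟩ :=
    ((isCompact_closedBall c r).diff isOpen_ball).exists_isMaxOn ⟨x, hxA⟩ hvcont
  refine (hmmax hxA).trans ?_
  rw [mem_closedBall] at hmr
  rw [mem_ball, not_lt] at hm
  rcases hm.eq_or_lt with hm | hm
  · have := hδle m (mem_sphere.mpr hm.symm)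
    have := hopfBarrier_le_one (r := r) (c := c) (x := m) hα
    simp only [v, Pi.add_apply, Pi.smul_apply, smul_eq_mul]
    nlinarith
  rcases hmr.eq_or_lt with hmr | hmr
  · exact hout m (hball (mem_closedBall.mpr hmr.le)) hmr.ge
  have hmU : m ∈ U := hball (mem_closedBall.mpr hmr.le)
  refine absurd ?_ (not_isLocalMax_add_smul_hopfBarrier
    (hC2.contDiffAt (hU.mem_nhds hmU)) (hΔu m hmU) hδ hr hm)
  have hAnhds : A ∈ 𝓝 m := by
    filter_upwards [isOpen_ball.mem_nhds (mem_ball.mpr hmr),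
      isClosed_closedBall.isOpen_compl.mem_nhds (by simpa using hm)] with z hz hz'
    exact ⟨ball_subset_closedBall hz, fun h => hz' (ball_subset_closedBall h)⟩
  exact mem_of_superset hAnhds hmmax

theorem lt_on_sphere_of_lt_on_ball (hU : IsOpen U) (hC2 : ContDiffOn ℝ 2 u U)
    (hΔu : ∀ x ∈ U, 0 ≤ laplacian n u x) (hle : ∀ x ∈ U, u x ≤ M) (hr : 0 < r)
    (hball : closedBall c r ⊆ U) (hlt : ∀ x ∈ ball c r, u x < M) :
    ∀ p ∈ sphere c r, u p < M := by
  intro p hp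
  by_contra! hMp
  rw [mem_sphere] at hp
  have hpU : p ∈ U := hball (mem_closedBall.mpr hp.le)
  have hsphere : sphere c (r / 2) ⊆ ball c r := sphere_subset_ball (by linarith)
  obtain ⟨δ, hδ, hδle⟩ := (isCompact_sphere c (r / 2)).exists_forall_le' (a := 0)
    (f := fun x => M - u x)
    ((continuousOn_const.sub hC2.continuousOn).mono
      (hsphere.trans (ball_subset_closedBall.trans hball)))
    (fun x hx => sub_pos.mpr (hlt x (hsphere hx)))
  have hvle := add_smul_hopfBarrier_le hU hC2 hΔu hle hr hball hδ
    (fun x hx => by linarith [hδle x hx])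
  refine not_isLocalMax_add_smul_hopfBarrier (c := c) (hC2.contDiffAt (hU.mem_nhds hpU))
    (hΔu p hpU) hδ hr (by linarith) ?_
  filter_upwards [hU.mem_nhds hpU, ball_mem_nhds p (half_pos hr)] with x hxU hxp
  refine le_trans (hvle x hxU ?_) ?_
  · linarith [dist_triangle p x c, mem_ball'.mp hxp]
  · simp [hopfBarrier_eq_zero_of_dist_eq hp, hMp]

theorem isOpen_inter_preimage_singleton_of_laplacian_nonneg (hU : IsOpen U)
    (hC2 : ContDiffOn ℝ 2 u U) (hΔu : ∀ x ∈ U, 0 ≤ laplacian n u x) (hle : ∀ x ∈ U, u x ≤ M) :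
    IsOpen (U ∩ u ⁻¹' {M}) := by
  have hN : IsOpen (U ∩ u ⁻¹' Set.Iio M) := hC2.continuousOn.isOpen_inter_preimage hU isOpen_Iio
  refine isOpen_iff.mpr fun x ⟨hxU, hxM⟩ => ?_
  obtain ⟨ρ, hρ, hρU⟩ := isOpen_iff.mp hU x hxU
  refine ⟨ρ / 2, half_pos hρ, fun y hy => ⟨hρU (ball_subset_ball (by linarith) hy), ?_⟩⟩
  by_contra hyM
  have hyU : y ∈ U := hρU (ball_subset_ball (by linarith) hy)
  obtain ⟨r, hr, hrx, hrN, p, hpN, hpy⟩ := hN.exists_maximal_ball_subset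
    ⟨hyU, lt_of_le_of_ne (hle y hyU) hyM⟩ (fun h => h.2.ne hxM)
  have hball : closedBall y r ⊆ U := fun z hz => hρU <| mem_ball.mpr <| by
    linarith [dist_triangle z y x, mem_closedBall.mp hz, mem_ball.mp hy]
  exact hpN ⟨hball (mem_closedBall.mpr hpy.le), lt_on_sphere_of_lt_on_ball hU hC2 hΔu hle hr
    hball (fun z hz => (hrN hz).2) p (mem_sphere.mpr hpy)⟩

theorem eqOn_of_isPreconnected_of_isMaxOn_of_laplacian_nonneg {x₀ : EuclideanSpace ℝ (Fin n)}
    (hU : IsOpen U) (hUc : IsPreconnected U) (hC2 : ContDiffOn ℝ 2 u U)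
    (hΔu : ∀ x ∈ U, 0 ≤ laplacian n u x) (hx₀ : x₀ ∈ U) (hmax : IsMaxOn u U x₀) :
    Set.EqOn u (fun _ => u x₀) U := by
  have hle : ∀ x ∈ U, u x ≤ u x₀ := fun _ hx => hmax hx
  have hsub := hUc.subset_left_of_subset_union
    (isOpen_inter_preimage_singleton_of_laplacian_nonneg hU hC2 hΔu hle)
    (hC2.continuousOn.isOpen_inter_preimage hU (isOpen_Iio (a := u x₀)))
    (Set.disjoint_left.mpr fun x hx hx' => hx'.2.ne hx.2)
    (fun x hx => (hle x hx).eq_or_lt.imp (fun h => ⟨hx, h⟩) fun h => ⟨hx, h⟩)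
    ⟨x₀, hx₀, hx₀, rfl⟩
  exact fun _ hx => (hsub hx).2

end MaximumPrinciple

section PerforatedDomain

variable {n : ℕ} {qd : Fin n → ℝ} {I : Set (EuclideanSpace ℝ (Fin n))}

def latticeHole (n : ℕ) (qd : Fin n → ℝ) (I : Set (EuclideanSpace ℝ (Fin n))) (z : Fin n → ℤ) :
    Set (EuclideanSpace ℝ (Fin n)) :=
  closure ((latticePt n qd z + ·) '' I)

def closedLatticeCell (n : ℕ) (qd : Fin n → ℝ) (z : Fin n → ℤ) : Set (EuclideanSpace ℝ (Fin n)) :=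
  {x | ∀ j, x j ∈ Set.Icc (qd j * z j) (qd j * z j + qd j)}

def latticeGrid (n : ℕ) (qd : Fin n → ℝ) : Set (EuclideanSpace ℝ (Fin n)) :=
  ⋃ p : Fin n × ℤ, {x | x p.1 = qd p.1 * p.2}

@[simp] theorem latticePt_apply (z : Fin n → ℤ) (j : Fin n) : latticePt n qd z j = qd j * z j :=
  rfl

theorem mem_latticeHole_iff {z : Fin n → ℤ} {x : EuclideanSpace ℝ (Fin n)} :
    x ∈ latticeHole n qd I z ↔ x - latticePt n qd z ∈ closure I := by
  rw [latticeHole, ← Homeomorph.coe_addLeft, ← Homeomorph.image_closure,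
    Homeomorph.coe_addLeft, Set.image_add_left, Set.mem_preimage, neg_add_eq_sub]

theorem int_le_of_mul_lt_mul_add_self {q : ℝ} {a b : ℤ} (hq : 0 < q) (h : q * a < q * b + q) :
    a ≤ b := by
  have : (a : ℝ) < b + 1 := by nlinarith
  exact Int.lt_add_one_iff.mp (by exact_mod_cast this)

theorem mem_closedLatticeCell_of_sub_mem_cellQ {z : Fin n → ℤ} {x : EuclideanSpace ℝ (Fin n)}
    (hx : x - latticePt n qd z ∈ cellQ n qd) : x ∈ closedLatticeCell n qd z := fun j => by
  obtain ⟨h₁, h₂⟩ := hx j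
  simp only [PiLp.sub_apply, latticePt_apply] at h₁ h₂
  constructor <;> linarith

theorem eq_of_mem_closedLatticeCell_of_sub_mem_cellQ {z z' : Fin n → ℤ}
    {x : EuclideanSpace ℝ (Fin n)} (hx : x ∈ closedLatticeCell n qd z)
    (hx' : x - latticePt n qd z' ∈ cellQ n qd) : z' = z := by
  funext j
  obtain ⟨h₁, h₂⟩ := hx j
  obtain ⟨h₁', h₂'⟩ := hx' j
  simp only [PiLp.sub_apply, latticePt_apply] at h₁' h₂'
  have hq : 0 < qd j := by linarith
  exact le_antisymm (int_le_of_mul_lt_mul_add_self hq (by linarith))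
    (int_le_of_mul_lt_mul_add_self hq (by linarith))

theorem sub_latticePt_notMem_cellQ_of_mem_latticeGrid {x : EuclideanSpace ℝ (Fin n)}
    (hx : x ∈ latticeGrid n qd) (z : Fin n → ℤ) : x - latticePt n qd z ∉ cellQ n qd := by
  obtain ⟨⟨j, m⟩, hj : x j = qd j * m⟩ := Set.mem_iUnion.mp hx
  intro h
  obtain ⟨h₁, h₂⟩ := h j
  simp only [PiLp.sub_apply, latticePt_apply, hj] at h₁ h₂
  have hq : 0 < qd j := by linarith
  have hzm : (z j : ℝ) < m := lt_of_mul_lt_mul_left (by linarith) hq.le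
  have hmz := int_le_of_mul_lt_mul_add_self (a := m) (b := z j) hq (by linarith)
  exact absurd hzm (not_lt.mpr (by exact_mod_cast hmz))

theorem isOpen_cellQ : IsOpen (cellQ n qd) := by
  have : cellQ n qd = ⋂ j, (fun x : EuclideanSpace ℝ (Fin n) => x j) ⁻¹' Set.Ioo 0 (qd j) := by
    ext x
    simp [cellQ]
  rw [this]
  exact isOpen_iInter_of_finite fun j => isOpen_Ioo.preimage (by fun_prop)

theorem locallyFinite_latticeHole (hIb : Bornology.IsBounded I) (hIQ : closure I ⊆ cellQ n qd) :
    LocallyFinite (latticeHole n qd I) := by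
  obtain ⟨δ, hδ, hδQ⟩ := hIb.isCompact_closure.exists_cthickening_subset_open isOpen_cellQ hIQ
  have hnear : ∀ {x y : EuclideanSpace ℝ (Fin n)} {z}, y ∈ ball x δ → y ∈ latticeHole n qd I z →
      x - latticePt n qd z ∈ cellQ n qd := fun hy hyz =>
    hδQ (mem_cthickening_of_dist_le _ _ δ _ (mem_latticeHole_iff.mp hyz)
      (by rw [dist_sub_right]; exact (mem_ball'.mp hy).le))
  refine fun x => ⟨ball x δ, ball_mem_nhds x hδ, Set.Subsingleton.finite ?_⟩
  rintro z ⟨y, hyz, hy⟩ z' ⟨y', hyz', hy'⟩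
  exact eq_of_mem_closedLatticeCell_of_sub_mem_cellQ
    (mem_closedLatticeCell_of_sub_mem_cellQ (hnear hy' hyz')) (hnear hy hyz)

theorem isOpen_perfDom (hIb : Bornology.IsBounded I) (hIQ : closure I ⊆ cellQ n qd) :
    IsOpen (perfDom n qd I) :=
  ((locallyFinite_latticeHole hIb hIQ).isClosed_iUnion fun _ => isClosed_closure).isOpen_compl

theorem mem_closedLatticeCell_floor (hqd : ∀ j, 0 < qd j) (x : EuclideanSpace ℝ (Fin n)) :
    x ∈ closedLatticeCell n qd (fun j => ⌊x j / qd j⌋) := fun j => by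
  have h₁ := Int.floor_le (x j / qd j)
  have h₂ := Int.lt_floor_add_one (x j / qd j)
  rw [le_div_iff₀ (hqd j)] at h₁
  rw [div_lt_iff₀ (hqd j)] at h₂
  constructor <;> nlinarith

theorem closedLatticeCell_diff_subset_perfDom (hIQ : closure I ⊆ cellQ n qd) (z : Fin n → ℤ) :
    closedLatticeCell n qd z \ latticeHole n qd I z ⊆ perfDom n qd I := by
  rintro x ⟨hx, hxz⟩ hx'
  obtain ⟨z', hz'⟩ := Set.mem_iUnion.mp hx'
  obtain rfl := eq_of_mem_closedLatticeCell_of_sub_mem_cellQ hx (hIQ (mem_latticeHole_iff.mp hz'))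
  exact hxz hz'

theorem latticeGrid_subset_perfDom (hIQ : closure I ⊆ cellQ n qd) :
    latticeGrid n qd ⊆ perfDom n qd I := fun x hx hx' => by
  obtain ⟨z, hz⟩ := Set.mem_iUnion.mp hx'
  exact sub_latticePt_notMem_cellQ_of_mem_latticeGrid hx z (hIQ (mem_latticeHole_iff.mp hz))

theorem perfDom_eq_iUnion (hqd : ∀ j, 0 < qd j) (hIQ : closure I ⊆ cellQ n qd) :
    perfDom n qd I = ⋃ z, closedLatticeCell n qd z \ latticeHole n qd I z := by
  refine subset_antisymm (fun x hx => ?_)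
    (Set.iUnion_subset (closedLatticeCell_diff_subset_perfDom hIQ))
  exact Set.mem_iUnion.mpr ⟨_, mem_closedLatticeCell_floor hqd x,
    fun h => hx (Set.mem_iUnion.mpr ⟨_, h⟩)⟩

def cellClamp (n : ℕ) (qd : Fin n → ℝ) (z : Fin n → ℤ) (x : EuclideanSpace ℝ (Fin n)) :
    EuclideanSpace ℝ (Fin n) :=
  WithLp.toLp 2 fun j => max (qd j * z j) (min (x j) (qd j * z j + qd j))

theorem continuous_cellClamp (z : Fin n → ℤ) : Continuous (cellClamp n qd z) := by
  unfold cellClamp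
  fun_prop

theorem cellClamp_mem_closedLatticeCell (hqd : ∀ j, 0 ≤ qd j) (z : Fin n → ℤ)
    (x : EuclideanSpace ℝ (Fin n)) : cellClamp n qd z x ∈ closedLatticeCell n qd z := fun j =>
  ⟨le_max_left _ _, max_le (le_add_of_nonneg_right (hqd j)) (min_le_right _ _)⟩

theorem cellClamp_of_mem_closedLatticeCell {z : Fin n → ℤ} {x : EuclideanSpace ℝ (Fin n)}
    (hx : x ∈ closedLatticeCell n qd z) : cellClamp n qd z x = x := by
  ext j
  simp [cellClamp, (hx j).1, (hx j).2]

theorem cellClamp_of_sub_mem_cellQ {z : Fin n → ℤ} {x : EuclideanSpace ℝ (Fin n)}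
    (hx : cellClamp n qd z x - latticePt n qd z ∈ cellQ n qd) : cellClamp n qd z x = x := by
  ext j
  obtain ⟨h₁, h₂⟩ := hx j
  simp only [cellClamp, PiLp.sub_apply, latticePt_apply, PiLp.toLp_apply] at h₁ h₂ ⊢
  simp only [max_def, min_def] at h₁ h₂ ⊢
  split_ifs at h₁ h₂ ⊢ <;> linarith

theorem image_cellClamp_compl_latticeHole (hqd : ∀ j, 0 < qd j) (hIQ : closure I ⊆ cellQ n qd)
    (z : Fin n → ℤ) : cellClamp n qd z '' (latticeHole n qd I z)ᶜ =
      closedLatticeCell n qd z \ latticeHole n qd I z := by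
  refine subset_antisymm ?_ fun x ⟨hx, hxz⟩ => ⟨x, hxz, cellClamp_of_mem_closedLatticeCell hx⟩
  rintro _ ⟨x, hxz, rfl⟩
  refine ⟨cellClamp_mem_closedLatticeCell (fun j => (hqd j).le) z x, fun h => hxz ?_⟩
  rwa [← cellClamp_of_sub_mem_cellQ (hIQ (mem_latticeHole_iff.mp h))]

theorem isPreconnected_closedLatticeCell_diff (hqd : ∀ j, 0 < qd j)
    (hIext : IsPreconnected (closure I)ᶜ) (hIQ : closure I ⊆ cellQ n qd) (z : Fin n → ℤ) :
    IsPreconnected (closedLatticeCell n qd z \ latticeHole n qd I z) := by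
  have htrans : (latticeHole n qd I z)ᶜ = (latticePt n qd z + ·) '' (closure I)ᶜ := by
    ext x
    simp [mem_latticeHole_iff, Set.image_add_left, neg_add_eq_sub]
  rw [← image_cellClamp_compl_latticeHole hqd hIQ z, htrans]
  exact (hIext.image _ (continuous_const_add _).continuousOn).image _
    (continuous_cellClamp z).continuousOn

theorem isPreconnected_iUnion_setOf_apply_eq (hn : 2 ≤ n) {ι : Type*} (c : Fin n → ι → ℝ) :
    IsPreconnected (⋃ p : Fin n × ι, {x : EuclideanSpace ℝ (Fin n) | x p.1 = c p.1 p.2}) := by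
  have : Nontrivial (Fin n) := Fin.nontrivial_iff_two_le.mpr hn
  have hmeet : ∀ p q : Fin n × ι, p.1 ≠ q.1 → ({x : EuclideanSpace ℝ (Fin n) | x p.1 = c p.1 p.2} ∩
      {x | x q.1 = c q.1 q.2}).Nonempty := fun p q hpq =>
    ⟨EuclideanSpace.single p.1 (c p.1 p.2) + EuclideanSpace.single q.1 (c q.1 q.2), by
      simp [hpq, hpq.symm]⟩
  refine IsPreconnected.iUnion_of_reflTransGen (fun p => ?_) fun p q => ?_
  · exact (convex_hyperplane (f := fun x : EuclideanSpace ℝ (Fin n) => x p.1)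
      (EuclideanSpace.proj p.1 : EuclideanSpace ℝ (Fin n) →L[ℝ] ℝ).isLinear _).isPreconnected
  by_cases hpq : p.1 = q.1
  · obtain ⟨j, hj⟩ := exists_ne p.1
    exact .tail (.single (hmeet p (j, p.2) hj.symm)) (hmeet (j, p.2) q (hpq ▸ hj))
  · exact .single (hmeet p q hpq)

theorem isPreconnected_perfDom (hn : 2 ≤ n) (hqd : ∀ j, 0 < qd j)
    (hIext : IsPreconnected (closure I)ᶜ) (hIQ : closure I ⊆ cellQ n qd) :
    IsPreconnected (perfDom n qd I) := by
  have hgrid : IsPreconnected (latticeGrid n qd) :=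
    isPreconnected_iUnion_setOf_apply_eq hn fun j (m : ℤ) => qd j * m
  let j₀ : Fin n := ⟨0, by omega⟩
  have hlat : ∀ z, latticePt n qd z ∈ latticeGrid n qd := fun z =>
    Set.mem_iUnion.mpr ⟨(j₀, z j₀), rfl⟩
  have hcover : perfDom n qd I =
      ⋃ z, (closedLatticeCell n qd z \ latticeHole n qd I z ∪ latticeGrid n qd) := by
    rw [← Set.iUnion_union, ← perfDom_eq_iUnion hqd hIQ,
      Set.union_eq_left.mpr (latticeGrid_subset_perfDom hIQ)]
  rw [hcover]
  refine isPreconnected_iUnion ⟨0, Set.mem_iInter.mpr fun _ => Or.inr ?_⟩ fun z => ?_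
  · convert hlat 0
    ext j
    simp
  refine IsPreconnected.union (latticePt n qd z) ?_ (hlat z)
    (isPreconnected_closedLatticeCell_diff hqd hIext hIQ z) hgrid
  refine ⟨fun j => ⟨le_refl _, by simpa using (hqd j).le⟩, fun h => ?_⟩
  exact latticeGrid_subset_perfDom hIQ (hlat z) (Set.mem_iUnion.mpr ⟨z, h⟩)

end PerforatedDomain

theorem periodic_maximum_principle_max_general
    (n : ℕ) (hn : 2 ≤ n) (qd : Fin n → ℝ) (hqd : ∀ j, 0 < qd j)
    (I : Set (EuclideanSpace ℝ (Fin n)))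
    (hIb : Bornology.IsBounded I)
    (hIext : IsConnected (closure I)ᶜ)
    (hIQ : closure I ⊆ cellQ n qd)
    (u : EuclideanSpace ℝ (Fin n) → ℝ)
    (hC2 : ContDiffOn ℝ 2 u (perfDom n qd I))
    (hharm : ∀ x ∈ perfDom n qd I, laplacian n u x = 0)
    (x₀ : EuclideanSpace ℝ (Fin n)) (hx₀ : x₀ ∈ perfDom n qd I)
    (hmax : ∀ x ∈ closure (perfDom n qd I), u x ≤ u x₀) :
    ∀ x ∈ perfDom n qd I, u x = u x₀ :=
  eqOn_of_isPreconnected_of_isMaxOn_of_laplacian_nonneg (isOpen_perfDom hIb hIQ)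
    (isPreconnected_perfDom hn hqd hIext.isPreconnected hIQ) hC2 (fun x hx => (hharm x hx).ge)
    hx₀ fun x hx => hmax x (subset_closure hx)

/-- Maximum principle in the periodically perforated domain: a continuous `q`-periodic
function, harmonic in `𝕊[𝕀]⁻`, attaining its maximum at an interior point of `𝕊[𝕀]⁻`,
is constant in `𝕊[𝕀]⁻`. -/
theorem periodic_maximum_principle_max
    (n : ℕ) (hn : 2 ≤ n) (qd : Fin n → ℝ) (hqd : ∀ j, 0 < qd j)
    (I : Set (EuclideanSpace ℝ (Fin n)))
    (hIne : I.Nonempty) (hIo : IsOpen I) (hIb : Bornology.IsBounded I)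
    (hIconn : IsConnected I) (hIext : IsConnected (closure I)ᶜ)
    (hIQ : closure I ⊆ cellQ n qd)
    (u : EuclideanSpace ℝ (Fin n) → ℝ)
    (hu : ContinuousOn u (closure (perfDom n qd I)))
    (hper : ∀ x ∈ closure (perfDom n qd I), ∀ j : Fin n,
      u (x + EuclideanSpace.single j (qd j)) = u x)
    (hC2 : ContDiffOn ℝ 2 u (perfDom n qd I))
    (hharm : ∀ x ∈ perfDom n qd I, laplacian n u x = 0)
    (x₀ : EuclideanSpace ℝ (Fin n)) (hx₀ : x₀ ∈ perfDom n qd I)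
    (hmax : ∀ x ∈ closure (perfDom n qd I), u x ≤ u x₀) :
    ∀ x ∈ perfDom n qd I, u x = u x₀ :=
  periodic_maximum_principle_max_general n hn qd hqd I hIb hIext hIQ u hC2 hharm x₀ hx₀ hmax
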